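/- In the one-period constrained robust market (P convex set of measures, H(P) and C_H(P) convex and closed, NA(P) holds), the set K(P) := {H·ΔS − X : H ∈ H, X ≥ 0 P-q.s.} is P-quasi-surely closed: if W_n ∈ K(P) and W_n → W P-q.s., then W ∈ K(P). -/

import Mathlib

open MeasureTheory Filter Set
open scoped RealInnerProductSpace ENNReal

noncomputable section

variable {Ω : Type*} [MeasurableSpace Ω] {d : ℕ}

/-- Quasi-sure support of `ΔS` under a family of measures. -/
def qsSupport (Pfam : Set (Measure Ω)) (ΔS : Ω → EuclideanSpace ℝ (Fin d)) :
    Set (EuclideanSpace ℝ (Fin d)) :=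
  ⋂₀ {A | IsClosed A ∧ ∀ P ∈ Pfam, ∀ᵐ ω ∂P, ΔS ω ∈ A}

/-- `N⊥(𝒫)`, the span of the quasi-sure support. -/
def NperpF (Pfam : Set (Measure Ω)) (ΔS : Ω → EuclideanSpace ℝ (Fin d)) :
    Submodule ℝ (EuclideanSpace ℝ (Fin d)) :=
  Submodule.span ℝ (qsSupport Pfam ΔS)

/-- The projected strategy set `𝓗(𝒫)`. -/
def projSet (Pfam : Set (Measure Ω)) (ΔS : Ω → EuclideanSpace ℝ (Fin d))
    (𝓗 : Set (EuclideanSpace ℝ (Fin d))) : Set (EuclideanSpace ℝ (Fin d)) :=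
  (fun h => ((Submodule.orthogonalProjection (NperpF Pfam ΔS) h : EuclideanSpace ℝ (Fin d)))) '' 𝓗

/-- The generated projected cone `C_𝓗(𝒫)`. -/
def projCone (Pfam : Set (Measure Ω)) (ΔS : Ω → EuclideanSpace ℝ (Fin d))
    (𝓗 : Set (EuclideanSpace ℝ (Fin d))) : Set (EuclideanSpace ℝ (Fin d)) :=
  {x | ∃ c : ℝ, 0 ≤ c ∧ ∃ h ∈ projSet Pfam ΔS 𝓗, x = c • h}

/-- NA(𝒫): no quasi-sure arbitrage among admissible strategies. -/
def NAqs (Pfam : Set (Measure Ω)) (ΔS : Ω → EuclideanSpace ℝ (Fin d))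
    (𝓗 : Set (EuclideanSpace ℝ (Fin d))) : Prop :=
  ∀ H ∈ 𝓗, (∀ P ∈ Pfam, ∀ᵐ ω ∂P, 0 ≤ ⟪H, ΔS ω⟫) →
    (∀ P ∈ Pfam, ∀ᵐ ω ∂P, ⟪H, ΔS ω⟫ = 0)

/-- The quasi-sure superhedging price of `f`, valued in the extended reals. -/
def piQS (Pfam : Set (Measure Ω)) (ΔS : Ω → EuclideanSpace ℝ (Fin d))
    (𝓗 : Set (EuclideanSpace ℝ (Fin d))) (f : Ω → ℝ) : EReal :=
  sInf {x : EReal | ∃ r : ℝ, x = (r : EReal) ∧ ∃ H ∈ 𝓗,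
    ∀ P ∈ Pfam, ∀ᵐ ω ∂P, f ω ≤ r + ⟪H, ΔS ω⟫}

/-- The expectation of `f` under `Q` in the extended sense, with convention `∞ - ∞ = -∞`. -/
def eexp (Q : Measure Ω) (f : Ω → ℝ) : EReal :=
  ((∫⁻ ω, ENNReal.ofReal (f ω) ∂Q : ℝ≥0∞) : EReal) -
    ((∫⁻ ω, ENNReal.ofReal (-f ω) ∂Q : ℝ≥0∞) : EReal)

/-!
Quasi-surely `ΔS` lies in its quasi-sure support, hence in `N⊥(𝒫)`, so `⟪H, ΔS⟫` only depends
on the projection `h` of `H` onto `N⊥(𝒫)`, and `W n ≤ ⟪h n, ΔS⟫` q.s. with `h n ∈ 𝓗(𝒫)`.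
If `(h n)` has a bounded subsequence, a further subsequence converges in the closed set `𝓗(𝒫)`
and the inequality passes to the limit. Otherwise the directions `h n / ‖h n‖` accumulate at a
unit vector `g` of the closed cone `C_𝓗(𝒫)` with `⟪g, ΔS⟫ ≥ lim W n / ‖h n‖ = 0` q.s.;
no-arbitrage upgrades this to `⟪g, ΔS⟫ = 0` q.s., so `g ∈ N⊥(𝒫)` is orthogonal to the
quasi-sure support and therefore to itself, a contradiction.
-/

open scoped Topology

theorem exists_subseq_tendsto_or_tendsto_normalize {E : Type*} [NormedAddCommGroup E]
    [NormedSpace ℝ E] [ProperSpace E] (u : ℕ → E) :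
    (∃ φ : ℕ → ℕ, StrictMono φ ∧ ∃ a, Tendsto (u ∘ φ) atTop (𝓝 a)) ∨
    ∃ φ : ℕ → ℕ, StrictMono φ ∧ Tendsto (fun n => ‖u (φ n)‖) atTop atTop ∧
      ∃ g, ‖g‖ = 1 ∧ Tendsto (fun n => ‖u (φ n)‖⁻¹ • u (φ n)) atTop (𝓝 g) := by
  by_cases hbdd : ∃ C, ∃ᶠ n in atTop, u n ∈ Metric.closedBall (0 : E) C
  · obtain ⟨C, hC⟩ := hbdd
    obtain ⟨a, -, φ, hφ, ha⟩ := tendsto_subseq_of_frequently_bounded Metric.isBounded_closedBall hC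
    exact Or.inl ⟨φ, hφ, a, ha⟩
  · simp only [not_exists, not_frequently, Metric.mem_closedBall, dist_zero_right, not_le] at hbdd
    have hnorm : Tendsto (fun n => ‖u n‖) atTop atTop :=
      tendsto_atTop.2 fun C => (hbdd C).mono fun _ => le_of_lt
    have hsphere : ∃ᶠ n in atTop, ‖u n‖⁻¹ • u n ∈ Metric.sphere (0 : E) 1 :=
      ((hnorm.eventually_gt_atTop 0).mono fun n hn => by
        simp [norm_smul, inv_mul_cancel₀ hn.ne']).frequently
    obtain ⟨g, hg, φ, hφ, hlim⟩ := (isCompact_sphere (0 : E) 1).tendsto_subseq' hsphere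
    exact Or.inr ⟨φ, hφ, hnorm.comp hφ.tendsto_atTop, g, mem_sphere_zero_iff_norm.1 hg, hlim⟩

theorem inner_nonneg_of_tendsto_inv_norm_smul {E : Type*} [NormedAddCommGroup E]
    [InnerProductSpace ℝ E] {ι : Type*} {l : Filter ι} [l.NeBot] {u : ι → E} {w : ι → ℝ}
    {x g : E} {c : ℝ} (hu : Tendsto (fun i => ‖u i‖) l atTop)
    (hg : Tendsto (fun i => ‖u i‖⁻¹ • u i) l (𝓝 g)) (hw : Tendsto w l (𝓝 c))
    (hle : ∀ i, w i ≤ ⟪u i, x⟫) : 0 ≤ ⟪g, x⟫ := by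
  have hscaled : Tendsto (fun i => ‖u i‖⁻¹ * w i) l (𝓝 0) := by
    simpa using (tendsto_inv_atTop_zero.comp hu).mul hw
  refine le_of_tendsto_of_tendsto' hscaled (hg.inner tendsto_const_nhds) fun i => ?_
  rw [real_inner_smul_left]
  exact mul_le_mul_of_nonneg_left (hle i) (inv_nonneg.2 (norm_nonneg _))

section QuasiSure

variable (Pfam : Set (Measure Ω)) (ΔS : Ω → EuclideanSpace ℝ (Fin d))

theorem ae_mem_qsSupport : ∀ P ∈ Pfam, ∀ᵐ ω ∂P, ΔS ω ∈ qsSupport Pfam ΔS := by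
  intro P hP
  set S := {A | IsClosed A ∧ ∀ P ∈ Pfam, ∀ᵐ ω ∂P, ΔS ω ∈ A}
  -- Lindelöf: countably many sets of `S` already cut out the support.
  obtain ⟨T, hTc, hTS, hT⟩ := TopologicalSpace.isOpen_sUnion_countable (compl '' S)
    (forall_mem_image.2 fun A hA => hA.1.isOpen_compl)
  have hsupp : qsSupport Pfam ΔS = (⋃₀ T)ᶜ := by
    rw [hT, compl_sUnion, image_image]
    simp only [compl_compl, image_id']
    rfl
  have hT_ae : ∀ B ∈ T, ∀ᵐ ω ∂P, ΔS ω ∉ B := fun B hB => by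
    obtain ⟨A, hA, rfl⟩ := hTS hB
    simpa using hA.2 P hP
  filter_upwards [(ae_ball_iff hTc).2 hT_ae] with ω hω
  simpa [hsupp] using hω

theorem qsSupport_subset {A : Set (EuclideanSpace ℝ (Fin d))} (hA : IsClosed A)
    (h : ∀ P ∈ Pfam, ∀ᵐ ω ∂P, ΔS ω ∈ A) : qsSupport Pfam ΔS ⊆ A :=
  sInter_subset_of_mem ⟨hA, h⟩

theorem ae_inner_starProjection_NperpF : ∀ P ∈ Pfam, ∀ᵐ ω ∂P,
    ∀ G, ⟪(NperpF Pfam ΔS).starProjection G, ΔS ω⟫ = ⟪G, ΔS ω⟫ := by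
  intro P hP
  filter_upwards [ae_mem_qsSupport Pfam ΔS P hP] with ω hω G
  rw [Submodule.inner_starProjection_left_eq_right,
    (Submodule.starProjection_eq_self_iff (K := NperpF Pfam ΔS)).2 (Submodule.subset_span hω)]

theorem eq_zero_of_mem_NperpF {g : EuclideanSpace ℝ (Fin d)} (hg : g ∈ NperpF Pfam ΔS)
    (h0 : ∀ P ∈ Pfam, ∀ᵐ ω ∂P, ⟪g, ΔS ω⟫ = 0) : g = 0 := by
  have hker : NperpF Pfam ΔS ≤ LinearMap.ker (innerₛₗ ℝ g) :=
    Submodule.span_le.2 <| qsSupport_subset Pfam ΔS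
      (isClosed_eq (continuous_const.inner continuous_id) continuous_const) h0
  simpa using hker hg

theorem mem_projSet_iff {𝓗 : Set (EuclideanSpace ℝ (Fin d))} {x : EuclideanSpace ℝ (Fin d)} :
    x ∈ projSet Pfam ΔS 𝓗 ↔ ∃ H ∈ 𝓗, (NperpF Pfam ΔS).starProjection H = x :=
  Iff.rfl

variable {Pfam ΔS} in
theorem NAqs.eq_zero_of_mem_projCone {𝓗 : Set (EuclideanSpace ℝ (Fin d))}
    (hNA : NAqs Pfam ΔS 𝓗) {g : EuclideanSpace ℝ (Fin d)} (hg : g ∈ projCone Pfam ΔS 𝓗)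
    (hpos : ∀ P ∈ Pfam, ∀ᵐ ω ∂P, 0 ≤ ⟪g, ΔS ω⟫) : g = 0 := by
  obtain ⟨c, hc, _, hproj_mem, rfl⟩ := hg
  obtain ⟨H, hH, rfl⟩ := (mem_projSet_iff Pfam ΔS).1 hproj_mem
  rcases hc.eq_or_lt with rfl | hc
  · exact zero_smul _ _
  have hproj := ae_inner_starProjection_NperpF Pfam ΔS
  have hH_zero := hNA H hH fun P hP => by
    filter_upwards [hpos P hP, hproj P hP] with ω hω hωproj
    rwa [real_inner_smul_left, mul_nonneg_iff_of_pos_left hc, hωproj] at hω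
  refine eq_zero_of_mem_NperpF Pfam ΔS
    (Submodule.smul_mem _ c (Submodule.starProjection_apply_mem _ _)) fun P hP => ?_
  filter_upwards [hH_zero P hP, hproj P hP] with ω hω hωproj
  rw [real_inner_smul_left, hωproj, hω, mul_zero]

end QuasiSure

theorem stmt11_general {Ω : Type*} [MeasurableSpace Ω] {d : ℕ} (Pfam : Set (Measure Ω))
    (ΔS : Ω → EuclideanSpace ℝ (Fin d))
    (𝓗 : Set (EuclideanSpace ℝ (Fin d)))
    (hHclosed : IsClosed (projSet Pfam ΔS 𝓗))
    (hCclosed : IsClosed (projCone Pfam ΔS 𝓗))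
    (hNA : NAqs Pfam ΔS 𝓗)
    (W : ℕ → Ω → ℝ) (Wlim : Ω → ℝ)
    (hW : ∀ n, ∃ H ∈ 𝓗, ∃ X : Ω → ℝ, (∀ P ∈ Pfam, ∀ᵐ ω ∂P, 0 ≤ X ω) ∧
      ∀ ω, W n ω = ⟪H, ΔS ω⟫ - X ω)
    (hconv : ∀ P ∈ Pfam, ∀ᵐ ω ∂P, Tendsto (fun n => W n ω) atTop (nhds (Wlim ω))) :
    ∃ H ∈ 𝓗, ∃ X : Ω → ℝ, (∀ P ∈ Pfam, ∀ᵐ ω ∂P, 0 ≤ X ω) ∧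
      ∀ P ∈ Pfam, ∀ᵐ ω ∂P, Wlim ω = ⟪H, ΔS ω⟫ - X ω := by
  choose H hH X hX hWX using hW
  set h := fun n => (NperpF Pfam ΔS).starProjection (H n)
  have hh : ∀ n, h n ∈ projSet Pfam ΔS 𝓗 := fun n => ⟨H n, hH n, rfl⟩
  have hproj := ae_inner_starProjection_NperpF Pfam ΔS
  have hgood : ∀ P ∈ Pfam, ∀ᵐ ω ∂P,
      Tendsto (W · ω) atTop (𝓝 (Wlim ω)) ∧ ∀ n, W n ω ≤ ⟪h n, ΔS ω⟫ := fun P hP => by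
    filter_upwards [hconv P hP, ae_all_iff.2 fun n => hX n P hP, hproj P hP]
      with ω hWt hX0 hωproj
    exact ⟨hWt, fun n => by rw [hωproj, hWX]; linarith [hX0 n]⟩
  rcases exists_subseq_tendsto_or_tendsto_normalize h with
    ⟨φ, hφ, a, ha⟩ | ⟨φ, hφ, hnorm, g, hg_norm, hg⟩
  · obtain ⟨H', hH', rfl⟩ := (mem_projSet_iff Pfam ΔS).1
      (hHclosed.mem_of_tendsto ha (.of_forall fun n => hh _))
    refine ⟨H', hH', fun ω => ⟪H', ΔS ω⟫ - Wlim ω, fun P hP => ?_,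
      fun P hP => .of_forall fun ω => by ring⟩
    filter_upwards [hgood P hP, hproj P hP] with ω ⟨hWt, hWle⟩ hωproj
    rw [← hωproj, sub_nonneg]
    exact le_of_tendsto_of_tendsto' (hWt.comp hφ.tendsto_atTop) (ha.inner tendsto_const_nhds)
      fun n => hWle _
  · have hgC : g ∈ projCone Pfam ΔS 𝓗 := hCclosed.mem_of_tendsto hg
      (.of_forall fun n => ⟨_, inv_nonneg.2 (norm_nonneg _), _, hh _, rfl⟩)
    have hg_zero := hNA.eq_zero_of_mem_projCone hgC fun P hP => by
      filter_upwards [hgood P hP] with ω ⟨hWt, hWle⟩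
      exact inner_nonneg_of_tendsto_inv_norm_smul hnorm hg (hWt.comp hφ.tendsto_atTop)
        fun n => hWle _
    simp [hg_zero] at hg_norm

/-- Lemma 4.3: the set `K(𝒫) = {H·ΔS − X : H ∈ 𝓗, X ≥ 0 𝒫-q.s.}` is
`𝒫`-quasi-surely closed. -/
theorem stmt11 {Ω : Type*} [TopologicalSpace Ω] [PolishSpace Ω] [MeasurableSpace Ω]
    [BorelSpace Ω] {d : ℕ} (Pfam : Set (Measure Ω))
    (hprob : ∀ P ∈ Pfam, IsProbabilityMeasure P)
    (hconvex : ∀ P ∈ Pfam, ∀ P' ∈ Pfam, ∀ a b : ℝ≥0∞, a + b = 1 → a • P + b • P' ∈ Pfam)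
    (ΔS : Ω → EuclideanSpace ℝ (Fin d)) (hmeas : Measurable ΔS)
    (𝓗 : Set (EuclideanSpace ℝ (Fin d)))
    (hHconv : Convex ℝ (projSet Pfam ΔS 𝓗)) (hHclosed : IsClosed (projSet Pfam ΔS 𝓗))
    (hCclosed : IsClosed (projCone Pfam ΔS 𝓗))
    (hNA : NAqs Pfam ΔS 𝓗)
    (W : ℕ → Ω → ℝ) (Wlim : Ω → ℝ)
    (hW : ∀ n, ∃ H ∈ 𝓗, ∃ X : Ω → ℝ, (∀ P ∈ Pfam, ∀ᵐ ω ∂P, 0 ≤ X ω) ∧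
      ∀ ω, W n ω = ⟪H, ΔS ω⟫ - X ω)
    (hconv : ∀ P ∈ Pfam, ∀ᵐ ω ∂P, Tendsto (fun n => W n ω) atTop (nhds (Wlim ω))) :
    ∃ H ∈ 𝓗, ∃ X : Ω → ℝ, (∀ P ∈ Pfam, ∀ᵐ ω ∂P, 0 ≤ X ω) ∧
      ∀ P ∈ Pfam, ∀ᵐ ω ∂P, Wlim ω = ⟪H, ΔS ω⟫ - X ω :=
  stmt11_general Pfam ΔS 𝓗 hHclosed hCclosed hNA W Wlim hW hconv
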